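/- arXiv:2204.02016 — 2 statements merged into one kernel-verified Lean document; each statement's English description precedes it below -/
import Mathlib

section
/- Under assumptions (A1)-(A4), the unique solution $x$ of the DDE $x'(t)=f(t,x(t),x(t-\tau))$ with constant initial condition $x_0$ on $[-\tau,0]$ satisfies the segment-wise bound $\sup_{j\tau\leq t\leq(j+1)\tau}\|x(t)\|\leq K_j$ for $j=0,\ldots,n$, where $K_{-1}=\|x_0\|$ and $K_j=(1+K_{j-1})(1+\|K\|_{L^1([j\tau,(j+1)\tau])})\exp((1+K_{j-1})\|K\|_{L^1([j\tau,(j+1)\tau])})$. -/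
open MeasureTheory Set

set_option maxHeartbeats 1000000

open MeasureTheory Set intervalIntegral

lemma inv_one_sub_le_exp {y : ℝ} (h0 : 0 ≤ y) (h2 : y ≤ 1/2) :
    (1 - y)⁻¹ ≤ Real.exp (y + 2*y^2) := by
  have h1 : (0:ℝ) < 1 - y := by linarith
  have he : 1 + (y + 2*y^2) ≤ Real.exp (y + 2*y^2) := by
    have := Real.add_one_le_exp (y + 2*y^2); linarith
  rw [inv_eq_one_div, div_le_iff₀ h1]
  nlinarith [Real.exp_pos (y + 2*y^2)]

lemma gron (a b : ℝ) (hab : a ≤ b) (g u : ℝ → ℝ)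
    (hg : IntegrableOn g (Icc a b)) (hg0 : ∀ s ∈ Icc a b, 0 ≤ g s)
    (hu : ContinuousOn u (Icc a b)) (hu0 : ∀ s ∈ Icc a b, 0 ≤ u s)
    (B c : ℝ) (hB : 0 ≤ B) (hc : 0 ≤ c)
    (hyp : ∀ t ∈ Icc a b, u t ≤ B + c * ∫ s in Icc a t, g s * u s) :
    ∀ t ∈ Icc a b, u t ≤ B * (1 + ∫ s in Icc a b, g s) *
      Real.exp (c * ∫ s in Icc a b, g s) := by
  have hgu : IntegrableOn (fun s => g s * u s) (Icc a b) :=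
    hg.mul_continuousOn hu isCompact_Icc
  set I := ∫ s in Icc a b, g s with hIdef
  have hI0 : 0 ≤ I := setIntegral_nonneg measurableSet_Icc hg0
  have ha' : a ∈ Icc a b := ⟨le_rfl, hab⟩
  -- interval integrability helpers
  have huIcc : Icc a b = uIcc a b := (uIcc_of_le hab).symm
  have hgi : ∀ p ∈ Icc a b, ∀ q ∈ Icc a b, IntervalIntegrable g volume p q := by
    intro p hp q hq
    refine (hg.mono_set ?_).intervalIntegrable
    rw [huIcc] at hp hq ⊢
    exact uIcc_subset_uIcc hp hq
  have hgui : ∀ p ∈ Icc a b, ∀ q ∈ Icc a b,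
      IntervalIntegrable (fun s => g s * u s) volume p q := by
    intro p hp q hq
    refine (hgu.mono_set ?_).intervalIntegrable
    rw [huIcc] at hp hq ⊢
    exact uIcc_subset_uIcc hp hq
  -- rewrite hypothesis with interval integrals
  have hyp' : ∀ t ∈ Icc a b, u t ≤ B + c * ∫ s in a..t, g s * u s := by
    intro t ht
    have := hyp t ht
    rwa [integral_Icc_eq_integral_Ioc, ← integral_of_le ht.1] at this
  -- the epsilon
  set ε : ℝ := if 0 < I then
      min (1/(2*(c+1))) (Real.log (1+I)/(2*(c+1)^2*I)) else 1 with hεdef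
  have hcpos : (0:ℝ) < c + 1 := by linarith
  have hε : 0 < ε := by
    rw [hεdef]
    split_ifs with h
    · refine lt_min (by positivity) ?_
      have : 0 < Real.log (1+I) := Real.log_pos (by linarith)
      positivity
    · norm_num
  -- uniform continuity of the primitive
  set G : ℝ → ℝ := fun t => ∫ s in a..t, g s with hGdef
  have hGcont : ContinuousOn G (Icc a b) := by
    have h1 := intervalIntegral.continuousOn_primitive (f := g) (μ := volume)
      (a := a) (b := b) hg
    refine ContinuousOn.congr h1 ?_
    intro t ht
    rw [hGdef]
    simp only
    rw [integral_of_le ht.1]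
  obtain ⟨δ, hδ0, hδ⟩ := Metric.uniformContinuousOn_iff.1
    (isCompact_Icc.uniformContinuousOn_of_continuous hGcont) ε hε
  -- the partition
  obtain ⟨m₀, hm₀⟩ := exists_nat_gt ((b-a)/δ)
  set m : ℕ := m₀ + 1 with hmdef
  have hmpos : (0:ℝ) < m := by positivity
  have hm : (b - a)/δ < m := lt_of_lt_of_le hm₀ (by exact_mod_cast Nat.le_succ m₀)
  have hstepδ : (b-a)/m < δ := by
    rw [div_lt_iff₀ hmpos]
    calc b - a = ((b-a)/δ) * δ := by field_simp
    _ < m * δ := mul_lt_mul_of_pos_right hm hδ0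
    _ = δ * m := by ring
  set h : ℝ := (b-a)/m with hhdef
  have hh0 : 0 ≤ h := div_nonneg (by linarith) (le_of_lt hmpos)
  set T : ℕ → ℝ := fun l => a + l * h with hTdef
  have hT0 : T 0 = a := by simp [hTdef]
  have hTm : T m = b := by
    rw [hTdef]; simp only; rw [hhdef]; field_simp; ring
  have hTmono : ∀ k l : ℕ, k ≤ l → T k ≤ T l := by
    intro k l hkl
    rw [hTdef]; simp only
    have : (k:ℝ) ≤ l := by exact_mod_cast hkl
    nlinarith
  have hTmem : ∀ l : ℕ, l ≤ m → T l ∈ Icc a b := by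
    intro l hl
    constructor
    · rw [hTdef]; simp only
      have : 0 ≤ (l:ℝ) * h := by positivity
      linarith
    · rw [← hTm]; exact hTmono l m hl
  have hTstep : ∀ l : ℕ, T (l+1) - T l = h := by
    intro l; rw [hTdef]; simp only; push_cast; ring
  set Δ : ℕ → ℝ := fun l => ∫ s in (T l)..(T (l+1)), g s with hΔdef
  have hΔG : ∀ l : ℕ, l < m → Δ l = G (T (l+1)) - G (T l) := by
    intro l hl
    rw [hΔdef, hGdef]; simp only
    rw [integral_interval_sub_left (hgi a ha' (T (l+1)) (hTmem (l+1) (by omega)))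
      (hgi a ha' (T l) (hTmem l (by omega)))]
  have hΔ0 : ∀ l : ℕ, l < m → 0 ≤ Δ l := by
    intro l hl
    refine integral_nonneg (hTmono l (l+1) (by omega)) ?_
    intro s hs
    refine hg0 s ⟨le_trans (hTmem l (by omega)).1 hs.1, le_trans hs.2 (hTmem (l+1) (by omega)).2⟩
  have hΔε : ∀ l : ℕ, l < m → Δ l ≤ ε := by
    intro l hl
    rw [hΔG l hl]
    have hd := hδ (T (l+1)) (hTmem (l+1) (by omega)) (T l) (hTmem l (by omega)) ?_
    · rw [Real.dist_eq] at hd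
      have := le_abs_self (G (T (l+1)) - G (T l))
      linarith
    · rw [Real.dist_eq, hTstep l, abs_of_nonneg hh0]
      exact hstepδ
  have hΔI : ∀ l : ℕ, l < m → Δ l ≤ I := by
    intro l hl
    rw [hΔdef]; simp only
    rw [integral_of_le (hTmono l (l+1) (by omega)), hIdef, integral_Icc_eq_integral_Ioc]
    refine setIntegral_mono_set (hg.mono_set Ioc_subset_Icc_self) ?_ ?_
    · refine (ae_restrict_iff' measurableSet_Ioc).2 (ae_of_all _ ?_)
      intro s hs
      exact hg0 s ⟨le_of_lt hs.1, hs.2⟩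
    · refine HasSubset.Subset.eventuallyLE ?_
      exact Ioc_subset_Ioc (hTmem l (by omega)).1 (hTmem (l+1) (by omega)).2
  have hcΔ : ∀ l : ℕ, l < m → c * Δ l ≤ 1/2 := by
    intro l hl
    by_cases hI : 0 < I
    · have h1 : Δ l ≤ 1/(2*(c+1)) := le_trans (hΔε l hl) (by rw [hεdef]; simp [hI])
      have h2 : c * Δ l ≤ c * (1/(2*(c+1))) :=
        mul_le_mul_of_nonneg_left h1 hc
      have h3 : c * (1/(2*(c+1))) ≤ 1/2 := by
        rw [mul_one_div, div_le_div_iff₀ (by positivity) (by norm_num : (0:ℝ) < 2)]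
        nlinarith
      linarith
    · have hIz : I = 0 := le_antisymm (not_lt.1 hI) hI0
      have := hΔ0 l hl
      have := hΔI l hl
      nlinarith
  have hΔpos : ∀ l : ℕ, l < m → 0 < 1 - c * Δ l := by
    intro l hl; have := hcΔ l hl; linarith
  set P : ℕ → ℝ := fun l => ∏ k ∈ Finset.range l, (1 - c * Δ k)⁻¹ with hPdef
  have hPfac : ∀ k : ℕ, k < m → 1 ≤ (1 - c * Δ k)⁻¹ := by
    intro k hk
    rw [inv_eq_one_div, le_div_iff₀ (hΔpos k hk)]
    have := hΔ0 k hk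
    nlinarith
  have hP1 : ∀ l : ℕ, l ≤ m → 1 ≤ P l := by
    intro l hl
    rw [hPdef]
    calc (1:ℝ) = ∏ k ∈ Finset.range l, 1 := by simp
    _ ≤ ∏ k ∈ Finset.range l, (1 - c * Δ k)⁻¹ := by
        refine Finset.prod_le_prod (by norm_num) ?_
        intro k hk
        exact hPfac k (by simp at hk; omega)
  have hPsucc : ∀ l : ℕ, P (l+1) = P l * (1 - c * Δ l)⁻¹ := by
    intro l; rw [hPdef]; exact Finset.prod_range_succ _ _
  -- the key induction
  have key : ∀ l : ℕ, l ≤ m →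
      (B + c * ∫ s in a..(T l), g s * u s ≤ B * P l) ∧
      (∀ t ∈ Icc a (T l), u t ≤ B * P l) := by
    intro l
    induction l with
    | zero =>
      intro _
      constructor
      · rw [hT0, integral_same]
        simp [hPdef]
      · rw [hT0]
        intro t ht
        have ht' : t = a := le_antisymm ht.2 ht.1
        subst ht'
        have := hyp' t ha'
        rw [integral_same] at this
        simp only [hPdef, Finset.range_zero, Finset.prod_empty, mul_one]
        linarith
    | succ l ih =>
      intro hl1
      have hl : l < m := by omega
      obtain ⟨ih1, ih2⟩ := ih (by omega)
      have hTl := hTmem l (by omega)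
      have hTl1 := hTmem (l+1) (by omega)
      have hJne : T l ≤ T (l+1) := hTmono l (l+1) (by omega)
      have hJsub : Icc (T l) (T (l+1)) ⊆ Icc a b := Icc_subset_Icc hTl.1 hTl1.2
      obtain ⟨ξ, hξJ, hξmax⟩ := isCompact_Icc.exists_isMaxOn ⟨T l, ⟨le_rfl, hJne⟩⟩
        (hu.mono hJsub)
      set S := u ξ with hSdef
      have hS0 : 0 ≤ S := hu0 ξ (hJsub hξJ)
      -- bound on integrals over pieces of the subinterval
      have key2 : ∀ q ∈ Icc (T l) (T (l+1)), ∫ s in (T l)..q, g s * u s ≤ Δ l * S := by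
        intro q hq
        have hqab : q ∈ Icc a b := hJsub hq
        have h1 : ∫ s in (T l)..q, g s * u s ≤ ∫ s in (T l)..q, g s * S := by
          refine integral_mono_on hq.1 (hgui (T l) hTl q hqab) ((hgi (T l) hTl q hqab).mul_const S) ?_
          intro s hs
          have hsJ : s ∈ Icc (T l) (T (l+1)) := ⟨hs.1, le_trans hs.2 hq.2⟩
          exact mul_le_mul_of_nonneg_left (hξmax hsJ) (hg0 s (hJsub hsJ))
        have h2 : ∫ s in (T l)..q, g s * S = (∫ s in (T l)..q, g s) * S :=
          integral_mul_const S g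
        have h3 : (∫ s in (T l)..q, g s) ≤ Δ l := by
          rw [hΔdef]
          refine integral_mono_interval le_rfl hq.1 hq.2 ?_ (hgi (T l) hTl (T (l+1)) hTl1)
          refine (ae_restrict_iff' measurableSet_Ioc).2 (ae_of_all _ ?_)
          intro s hs
          exact hg0 s (hJsub ⟨le_of_lt hs.1, hs.2⟩)
        calc ∫ s in (T l)..q, g s * u s ≤ (∫ s in (T l)..q, g s) * S := by rw [← h2]; exact h1
        _ ≤ Δ l * S := mul_le_mul_of_nonneg_right h3 hS0
      have hsplit : ∀ q ∈ Icc (T l) (T (l+1)),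
          (∫ s in a..q, g s * u s) = (∫ s in a..(T l), g s * u s) + ∫ s in (T l)..q, g s * u s := by
        intro q hq
        rw [integral_add_adjacent_intervals (hgui a ha' (T l) hTl) (hgui (T l) hTl q (hJsub hq))]
      -- bound the max S
      have hSb : S ≤ B * P (l+1) := by
        have h1 : S ≤ B * P l + c * (Δ l * S) := by
          have h2 := hyp' ξ (hJsub hξJ)
          rw [hsplit ξ hξJ] at h2
          have h3 := key2 ξ hξJ
          have h4 : c * ∫ s in (T l)..ξ, g s * u s ≤ c * (Δ l * S) :=
            mul_le_mul_of_nonneg_left h3 hc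
          rw [hSdef]
          calc u ξ ≤ B + c * ((∫ s in a..(T l), g s * u s) + ∫ s in (T l)..ξ, g s * u s) := h2
          _ = (B + c * ∫ s in a..(T l), g s * u s) + c * ∫ s in (T l)..ξ, g s * u s := by ring
          _ ≤ B * P l + c * (Δ l * S) := by linarith
        have hpos := hΔpos l hl
        rw [hPsucc l, ← mul_assoc, inv_eq_one_div, mul_one_div, le_div_iff₀ hpos]
        nlinarith
      have hPrel : B * P l = B * P (l+1) * (1 - c * Δ l) := by
        have hne : (1 - c * Δ l) ≠ 0 := ne_of_gt (hΔpos l hl)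
        rw [hPsucc l]
        field_simp
      constructor
      · -- part 1
        rw [hsplit (T (l+1)) ⟨hJne, le_rfl⟩]
        have h3 := key2 (T (l+1)) ⟨hJne, le_rfl⟩
        have h4 : c * ∫ s in (T l)..(T (l+1)), g s * u s ≤ c * (Δ l * (B * P (l+1))) := by
          refine mul_le_mul_of_nonneg_left ?_ hc
          refine le_trans h3 ?_
          exact mul_le_mul_of_nonneg_left hSb (hΔ0 l hl)
        have h5 : B + c * ((∫ s in a..(T l), g s * u s) + ∫ s in (T l)..(T (l+1)), g s * u s)
            = (B + c * ∫ s in a..(T l), g s * u s) + c * ∫ s in (T l)..(T (l+1)), g s * u s := by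
          ring
        rw [h5]
        calc (B + c * ∫ s in a..(T l), g s * u s) + c * ∫ s in (T l)..(T (l+1)), g s * u s
            ≤ B * P l + c * (Δ l * (B * P (l+1))) := by linarith
        _ = B * P (l+1) * (1 - c * Δ l) + c * Δ l * (B * P (l+1)) := by rw [hPrel]; ring
        _ = B * P (l+1) := by ring
      · -- part 2
        intro t ht
        have hPm : P l ≤ P (l+1) := by
          rw [hPsucc l]
          have h1 := hPfac l hl
          have h2 : 0 < P l := lt_of_lt_of_le one_pos (hP1 l (by omega))
          nlinarith
        by_cases htl : t ≤ T l
        · have := ih2 t ⟨ht.1, htl⟩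
          have hB' : B * P l ≤ B * P (l+1) := mul_le_mul_of_nonneg_left hPm hB
          linarith
        · have htJ : t ∈ Icc (T l) (T (l+1)) := ⟨le_of_not_ge htl, ht.2⟩
          exact le_trans (hξmax htJ) hSb
  -- conclusion
  have hPmb : P m ≤ (1 + I) * Real.exp (c * I) := by
    have hsum : ∑ k ∈ Finset.range m, Δ k = I := by
      have h1 : ∀ k ∈ Finset.range m, Δ k = G (T (k+1)) - G (T k) := by
        intro k hk
        exact hΔG k (by simp at hk; omega)
      rw [Finset.sum_congr rfl h1, Finset.sum_range_sub (fun l => G (T l)), hT0, hTm]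
      rw [hGdef]; simp only
      rw [integral_same, sub_zero, integral_of_le hab, hIdef, integral_Icc_eq_integral_Ioc]
    have h1 : P m ≤ ∏ k ∈ Finset.range m, Real.exp (c * Δ k + 2*(c * Δ k)^2) := by
      rw [hPdef]
      refine Finset.prod_le_prod ?_ ?_
      · intro k hk
        exact le_of_lt (inv_pos.2 (hΔpos k (by simp at hk; omega)))
      · intro k hk
        have hk' : k < m := by simp at hk; omega
        refine inv_one_sub_le_exp ?_ (hcΔ k hk')
        exact mul_nonneg hc (hΔ0 k hk')
    rw [← Real.exp_sum] at h1
    have h2 : ∑ k ∈ Finset.range m, (c * Δ k + 2*(c * Δ k)^2)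
        ≤ c * I + Real.log (1 + I) := by
      rw [Finset.sum_add_distrib]
      have h3 : ∑ k ∈ Finset.range m, c * Δ k = c * I := by
        rw [← Finset.mul_sum, hsum]
      have h4 : ∑ k ∈ Finset.range m, 2*(c * Δ k)^2 ≤ Real.log (1 + I) := by
        by_cases hI : 0 < I
        · have hεle : ε ≤ Real.log (1+I)/(2*(c+1)^2*I) := by
            rw [hεdef]; simp [hI]
          have h5 : ∀ k ∈ Finset.range m, 2*(c * Δ k)^2 ≤ 2*c^2*ε * Δ k := by
            intro k hk
            have hk' : k < m := by simp at hk; omega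
            nlinarith [mul_le_mul_of_nonneg_left (hΔε k hk')
              (mul_nonneg (sq_nonneg c) (hΔ0 k hk'))]
          calc ∑ k ∈ Finset.range m, 2*(c * Δ k)^2
              ≤ ∑ k ∈ Finset.range m, 2*c^2*ε * Δ k := Finset.sum_le_sum h5
          _ = 2*c^2*ε * I := by rw [← Finset.mul_sum, hsum]
          _ ≤ Real.log (1 + I) := by
            have hlog : 0 < Real.log (1+I) := Real.log_pos (by linarith)
            have h6 : 2*c^2*ε*I ≤ 2*c^2*(Real.log (1+I)/(2*(c+1)^2*I))*I := by
              have hε2 : 0 ≤ 2*c^2*I := by positivity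
              nlinarith
            have h7 : 2*c^2*(Real.log (1+I)/(2*(c+1)^2*I))*I ≤ Real.log (1+I) := by
              have hD : (0:ℝ) < 2*(c+1)^2*I := by positivity
              rw [show 2*c^2*(Real.log (1+I)/(2*(c+1)^2*I))*I
                  = (2*c^2*I*Real.log (1+I))/(2*(c+1)^2*I) from by ring, div_le_iff₀ hD]
              nlinarith [mul_le_mul_of_nonneg_left (show c^2 ≤ (c+1)^2 by nlinarith)
                (show (0:ℝ) ≤ 2*I*Real.log (1+I) by positivity)]
            linarith
        · have hIz : I = 0 := le_antisymm (not_lt.1 hI) hI0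
          have h5 : ∀ k ∈ Finset.range m, 2*(c * Δ k)^2 = 0 := by
            intro k hk
            have hk' : k < m := by simp at hk; omega
            have hz : Δ k = 0 := le_antisymm (hIz ▸ hΔI k hk') (hΔ0 k hk')
            rw [hz]; ring
          rw [Finset.sum_congr rfl h5]
          simp [hIz]
      linarith
    calc P m ≤ Real.exp (∑ k ∈ Finset.range m, (c * Δ k + 2*(c * Δ k)^2)) := h1
    _ ≤ Real.exp (c * I + Real.log (1 + I)) := Real.exp_le_exp.2 h2
    _ = (1 + I) * Real.exp (c * I) := by
      rw [Real.exp_add, Real.exp_log (by linarith)]; ring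
  intro t ht
  have h1 : u t ≤ B * P m := (key m le_rfl).2 t (by rw [hTm]; exact ht)
  calc u t ≤ B * P m := h1
  _ ≤ B * ((1 + I) * Real.exp (c * I)) := mul_le_mul_of_nonneg_left hPmb hB
  _ = B * (1 + I) * Real.exp (c * I) := by ring


/-- The recursive constants of Theorem 3.1: `Kseq K τ ‖x₀‖ 0 = K_{-1} = ‖x₀‖` and
`Kseq K τ ‖x₀‖ (j+1) = K_j`. -/
noncomputable def Kseq (K : ℝ → ℝ) (τ K0 : ℝ) : ℕ → ℝ
  | 0 => K0
  | j + 1 =>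
      (1 + Kseq K τ K0 j) * (1 + ∫ t in Icc ((j:ℝ) * τ) (((j:ℝ) + 1) * τ), K t) *
        Real.exp ((1 + Kseq K τ K0 j) * ∫ t in Icc ((j:ℝ) * τ) (((j:ℝ) + 1) * τ), K t)

theorem stmt11 (d n : ℕ) (τ : ℝ) (hτ : 0 < τ)
    (f : ℝ → EuclideanSpace ℝ (Fin d) → EuclideanSpace ℝ (Fin d) → EuclideanSpace ℝ (Fin d))
    (x₀ : EuclideanSpace ℝ (Fin d)) (K : ℝ → ℝ)
    (hA1 : ∀ t, Continuous fun xz : EuclideanSpace ℝ (Fin d) × EuclideanSpace ℝ (Fin d) =>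
      f t xz.1 xz.2)
    (hA2 : ∀ x z, Measurable fun t => f t x z)
    (hK0 : ∀ t, 0 ≤ K t) (hKint : IntegrableOn K (Icc (0:ℝ) ((n+1)*τ)))
    (hA3 : ∀ t ∈ Icc (0:ℝ) ((n+1)*τ), ∀ x z : EuclideanSpace ℝ (Fin d),
      ‖f t x z‖ ≤ K t * (1 + ‖x‖) * (1 + ‖z‖))
    (hA4 : ∀ U : Set (EuclideanSpace ℝ (Fin d)), IsCompact U →
      ∃ L : ℝ → ℝ, (∀ t, 0 ≤ L t) ∧ IntegrableOn L (Icc (0:ℝ) ((n+1)*τ)) ∧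
        ∀ t ∈ Icc (0:ℝ) ((n+1)*τ), ∀ x₁ ∈ U, ∀ x₂ ∈ U, ∀ z : EuclideanSpace ℝ (Fin d),
          ‖f t x₁ z - f t x₂ z‖ ≤ L t * (1 + ‖z‖) * ‖x₁ - x₂‖)
    (x : ℝ → EuclideanSpace ℝ (Fin d))
    (hinit : ∀ t ∈ Icc (-τ) (0:ℝ), x t = x₀)
    (hint : IntegrableOn (fun s => f s (x s) (x (s - τ))) (Icc (0:ℝ) ((n+1)*τ)))
    (hsol : ∀ t ∈ Icc (0:ℝ) ((n+1)*τ), x t = x₀ + ∫ s in (0:ℝ)..t, f s (x s) (x (s - τ))) :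
    ∀ j ≤ n, ∀ t ∈ Icc ((j:ℝ) * τ) (((j:ℝ) + 1) * τ), ‖x t‖ ≤ Kseq K τ ‖x₀‖ (j + 1) := by
  have hKs0 : ∀ j : ℕ, 0 ≤ Kseq K τ ‖x₀‖ j := by
    intro j
    induction j with
    | zero => exact norm_nonneg x₀
    | succ j ih =>
      have hInn : 0 ≤ ∫ t in Icc ((j:ℝ) * τ) (((j:ℝ) + 1) * τ), K t :=
        setIntegral_nonneg measurableSet_Icc (fun t _ => hK0 t)
      simp only [Kseq]
      exact mul_nonneg (mul_nonneg (by linarith) (by linarith)) (Real.exp_nonneg _)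
  have hend : (0:ℝ) ≤ ((n:ℝ)+1)*τ := by positivity
  have hxcont : ContinuousOn x (Icc (0:ℝ) (((n:ℝ)+1)*τ)) := by
    have h1 : ContinuousOn (fun t => x₀ + ∫ s in (0:ℝ)..t, f s (x s) (x (s - τ)))
        (Icc (0:ℝ) (((n:ℝ)+1)*τ)) := by
      refine continuousOn_const.add ?_
      have h2 := intervalIntegral.continuousOn_primitive_interval (a := (0:ℝ))
        (b := ((n:ℝ)+1)*τ) (μ := volume) (f := fun s => f s (x s) (x (s-τ)))
        (by rwa [uIcc_of_le hend])
      rwa [uIcc_of_le hend] at h2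
    exact ContinuousOn.congr h1 (fun t ht => hsol t ht)
  have hFi : ∀ p ∈ Icc (0:ℝ) (((n:ℝ)+1)*τ), ∀ q ∈ Icc (0:ℝ) (((n:ℝ)+1)*τ),
      IntervalIntegrable (fun s => f s (x s) (x (s - τ))) volume p q := by
    intro p hp q hq
    have e : Icc (0:ℝ) (((n:ℝ)+1)*τ) = uIcc 0 (((n:ℝ)+1)*τ) := (uIcc_of_le hend).symm
    refine (hint.mono_set ?_).intervalIntegrable
    rw [e] at hp hq ⊢
    exact uIcc_subset_uIcc hp hq
  intro j
  induction j using Nat.strong_induction_on with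
  | _ j IH =>
    intro hjn t ht
    have hjn' : ((j:ℝ)+1) ≤ (n:ℝ)+1 := by exact_mod_cast Nat.succ_le_succ hjn
    have h0a : (0:ℝ) ≤ (j:ℝ)*τ := by positivity
    have hab : (j:ℝ)*τ ≤ ((j:ℝ)+1)*τ := by nlinarith
    have hble : ((j:ℝ)+1)*τ ≤ ((n:ℝ)+1)*τ := by nlinarith
    have hsub : Icc ((j:ℝ)*τ) (((j:ℝ)+1)*τ) ⊆ Icc (0:ℝ) (((n:ℝ)+1)*τ) :=
      Icc_subset_Icc h0a hble
    have prev : ∀ s ∈ Icc ((j:ℝ)*τ - τ) ((j:ℝ)*τ), ‖x s‖ ≤ Kseq K τ ‖x₀‖ j := by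
      cases j with
      | zero =>
        intro s hs
        simp only [Nat.cast_zero, zero_mul, zero_sub] at hs
        rw [hinit s hs]
        simp [Kseq]
      | succ k =>
        intro s hs
        have hk : k ≤ n := by omega
        refine IH k (by omega) hk s ?_
        push_cast at hs ⊢
        constructor
        · linarith [hs.1]
        · linarith [hs.2]
    have hc0 : (0:ℝ) ≤ 1 + Kseq K τ ‖x₀‖ j := by have := hKs0 j; linarith
    have hxa : ‖x ((j:ℝ)*τ)‖ ≤ Kseq K τ ‖x₀‖ j := prev _ ⟨by linarith, le_rfl⟩
    have hxc : ContinuousOn x (Icc ((j:ℝ)*τ) (((j:ℝ)+1)*τ)) := hxcont.mono hsub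
    have hu : ContinuousOn (fun s => 1 + ‖x s‖) (Icc ((j:ℝ)*τ) (((j:ℝ)+1)*τ)) :=
      continuousOn_const.add hxc.norm
    have hKsub : IntegrableOn K (Icc ((j:ℝ)*τ) (((j:ℝ)+1)*τ)) := hKint.mono_set hsub
    have hfsub : IntegrableOn (fun s => f s (x s) (x (s - τ)))
        (Icc ((j:ℝ)*τ) (((j:ℝ)+1)*τ)) := hint.mono_set hsub
    have hprevK : ∀ s ∈ Icc ((j:ℝ)*τ) (((j:ℝ)+1)*τ),
        1 + ‖x (s - τ)‖ ≤ 1 + Kseq K τ ‖x₀‖ j := by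
      intro s hs
      have h1 : ‖x (s - τ)‖ ≤ Kseq K τ ‖x₀‖ j := by
        refine prev (s - τ) ⟨by linarith [hs.1], by linarith [hs.2]⟩
      linarith
    have hyp : ∀ r ∈ Icc ((j:ℝ)*τ) (((j:ℝ)+1)*τ), 1 + ‖x r‖ ≤
        (1 + ‖x ((j:ℝ)*τ)‖) + (1 + Kseq K τ ‖x₀‖ j) *
          ∫ s in Icc ((j:ℝ)*τ) r, K s * (1 + ‖x s‖) := by
      intro r hr
      have h0r : r ∈ Icc (0:ℝ) (((n:ℝ)+1)*τ) := hsub hr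
      have ha' : ((j:ℝ)*τ) ∈ Icc (0:ℝ) (((n:ℝ)+1)*τ) := hsub ⟨le_rfl, hab⟩
      have h0' : (0:ℝ) ∈ Icc (0:ℝ) (((n:ℝ)+1)*τ) := ⟨le_rfl, hend⟩
      have h2 := intervalIntegral.integral_interval_sub_left
        (hFi 0 h0' r h0r) (hFi 0 h0' ((j:ℝ)*τ) ha')
      have hsplit : x r = x ((j:ℝ)*τ) +
          ∫ s in ((j:ℝ)*τ)..r, f s (x s) (x (s-τ)) := by
        rw [hsol r h0r, hsol ((j:ℝ)*τ) ha', ← h2]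
        abel
      have hn1 : ‖x r‖ ≤ ‖x ((j:ℝ)*τ)‖ + ‖∫ s in ((j:ℝ)*τ)..r, f s (x s) (x (s-τ))‖ := by
        rw [hsplit]; exact norm_add_le _ _
      have hn2 : ‖∫ s in ((j:ℝ)*τ)..r, f s (x s) (x (s-τ))‖ ≤
          ∫ s in ((j:ℝ)*τ)..r, ‖f s (x s) (x (s-τ))‖ :=
        intervalIntegral.norm_integral_le_integral_norm hr.1
      have hn3 : ∫ s in ((j:ℝ)*τ)..r, ‖f s (x s) (x (s-τ))‖ =
          ∫ s in Icc ((j:ℝ)*τ) r, ‖f s (x s) (x (s-τ))‖ := by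
        rw [intervalIntegral.integral_of_le hr.1]
        exact integral_Icc_eq_integral_Ioc.symm
      have hint1 : IntegrableOn (fun s => ‖f s (x s) (x (s-τ))‖)
          (Icc ((j:ℝ)*τ) (((j:ℝ)+1)*τ)) := hfsub.norm
      have hint2 : IntegrableOn (fun s => (1 + Kseq K τ ‖x₀‖ j) * (K s * (1 + ‖x s‖)))
          (Icc ((j:ℝ)*τ) (((j:ℝ)+1)*τ)) :=
        (hKsub.mul_continuousOn hu isCompact_Icc).const_mul (1 + Kseq K τ ‖x₀‖ j)
      have hmono : ∫ s in Icc ((j:ℝ)*τ) r, ‖f s (x s) (x (s-τ))‖ ≤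
          ∫ s in Icc ((j:ℝ)*τ) r, (1 + Kseq K τ ‖x₀‖ j) * (K s * (1 + ‖x s‖)) := by
        refine setIntegral_mono_on
          (hint1.mono_set (Icc_subset_Icc le_rfl hr.2))
          (hint2.mono_set (Icc_subset_Icc le_rfl hr.2))
          measurableSet_Icc ?_
        intro s hs
        have hsab : s ∈ Icc ((j:ℝ)*τ) (((j:ℝ)+1)*τ) := ⟨hs.1, le_trans hs.2 hr.2⟩
        have h3 := hA3 s (hsub hsab) (x s) (x (s - τ))
        have h4 := hprevK s hsab
        have hK := hK0 s
        have hxs : (0:ℝ) ≤ 1 + ‖x s‖ := by positivity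
        calc ‖f s (x s) (x (s-τ))‖ ≤ K s * (1 + ‖x s‖) * (1 + ‖x (s-τ)‖) := h3
        _ ≤ K s * (1 + ‖x s‖) * (1 + Kseq K τ ‖x₀‖ j) :=
          mul_le_mul_of_nonneg_left h4 (by positivity)
        _ = (1 + Kseq K τ ‖x₀‖ j) * (K s * (1 + ‖x s‖)) := by ring
      have hpull : ∫ s in Icc ((j:ℝ)*τ) r, (1 + Kseq K τ ‖x₀‖ j) * (K s * (1 + ‖x s‖)) =
          (1 + Kseq K τ ‖x₀‖ j) * ∫ s in Icc ((j:ℝ)*τ) r, K s * (1 + ‖x s‖) :=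
        MeasureTheory.integral_const_mul _ _
      rw [hn3] at hn2
      rw [hpull] at hmono
      linarith
    have main := gron ((j:ℝ)*τ) (((j:ℝ)+1)*τ) hab K (fun s => 1 + ‖x s‖) hKsub
      (fun s _ => hK0 s) hu (fun s _ => by positivity)
      (1 + ‖x ((j:ℝ)*τ)‖) (1 + Kseq K τ ‖x₀‖ j) (by positivity) hc0 hyp t ht
    have hI0 : 0 ≤ ∫ s in Icc ((j:ℝ)*τ) (((j:ℝ)+1)*τ), K s :=
      setIntegral_nonneg measurableSet_Icc (fun s _ => hK0 s)
    have hE : (0:ℝ) ≤ Real.exp ((1 + Kseq K τ ‖x₀‖ j) *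
        ∫ s in Icc ((j:ℝ)*τ) (((j:ℝ)+1)*τ), K s) := Real.exp_nonneg _
    have hBc : 1 + ‖x ((j:ℝ)*τ)‖ ≤ 1 + Kseq K τ ‖x₀‖ j := by linarith
    simp only [Kseq]
    calc ‖x t‖ ≤ 1 + ‖x t‖ := by linarith [norm_nonneg (x t)]
    _ ≤ (1 + ‖x ((j:ℝ)*τ)‖) * (1 + ∫ s in Icc ((j:ℝ)*τ) (((j:ℝ)+1)*τ), K s) *
        Real.exp ((1 + Kseq K τ ‖x₀‖ j) * ∫ s in Icc ((j:ℝ)*τ) (((j:ℝ)+1)*τ), K s) := main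
    _ ≤ (1 + Kseq K τ ‖x₀‖ j) * (1 + ∫ s in Icc ((j:ℝ)*τ) (((j:ℝ)+1)*τ), K s) *
        Real.exp ((1 + Kseq K τ ‖x₀‖ j) * ∫ s in Icc ((j:ℝ)*τ) (((j:ℝ)+1)*τ), K s) := by
      exact mul_le_mul_of_nonneg_right
        (mul_le_mul_of_nonneg_right hBc (by linarith)) hE
end

section
/- Under assumptions (A1)-(A4), and additionally $K\in L^p([0,(n+1)\tau])$ for some $p\in(1,+\infty]$, the solution $x$ of the DDE satisfies, for each $j=0,\ldots,n$ and $s,t\in[j\tau,(j+1)\tau]$: $\|x(t)-x(s)\|\leq (1+K_{j-1})(1+K_j)\,\|K\|_{L^p([j\tau,(j+1)\tau])}\,|t-s|^{1-1/p}$, i.e., $x$ is piecewise H\"older continuous of exponent $1-1/p$ on each delay interval. -/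
open MeasureTheory Set
open scoped ENNReal

lemma div_step {u Wt Ws : ℝ} (h0 : 0 ≤ u) (h2 : u ≤ 1/2) (hWs : 0 ≤ Ws)
    (h : (1 - u) * Wt ≤ Ws) : Wt ≤ Ws * Real.exp (u + u^2) := by
  have hq := Real.quadratic_le_exp_of_nonneg (by positivity : (0:ℝ) ≤ u + u^2)
  have hpos : 0 ≤ 1 - u - u^2 - u^3 := by nlinarith
  have key : 0 ≤ u^2 * (1 - u - u^2 - u^3) := mul_nonneg (sq_nonneg u) hpos
  have hE1 : 1 ≤ (1 - u) * Real.exp (u + u^2) := by nlinarith [hq, key]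
  rcases le_or_gt Wt 0 with hWt | hWt
  · exact hWt.trans (by positivity)
  · calc Wt = Wt * 1 := (mul_one _).symm
      _ ≤ Wt * ((1 - u) * Real.exp (u + u^2)) := by
          exact mul_le_mul_of_nonneg_left hE1 hWt.le
      _ = ((1 - u) * Wt) * Real.exp (u + u^2) := by ring
      _ ≤ Ws * Real.exp (u + u^2) := by
          exact mul_le_mul_of_nonneg_right h (Real.exp_pos _).le

lemma holder_L1 (K : ℝ → ℝ) (hK0 : ∀ t, 0 ≤ K t) {s t : ℝ} (hst : s ≤ t)
    (hKi : IntegrableOn K (Icc s t)) (p : ℝ≥0∞) (hp : 1 ≤ p)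
    (hfin : eLpNorm K p (volume.restrict (Icc s t)) ≠ ∞) :
    ∫ r in Icc s t, K r ≤
      (eLpNorm K p (volume.restrict (Icc s t))).toReal * (t - s) ^ ((1 - 1/p).toReal) := by
  set μ := volume.restrict (Icc s t) with hμ
  have hKm : AEStronglyMeasurable K μ := hKi.aestronglyMeasurable
  have h1 : ∫ r in Icc s t, K r = (eLpNorm K 1 μ).toReal := by
    rw [eLpNorm_one_eq_lintegral_enorm, ← integral_norm_eq_lintegral_enorm hKm]
    exact integral_congr_ae (Filter.Eventually.of_forall fun r => (Real.norm_of_nonneg (hK0 r)).symm)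
  have h2 : eLpNorm K 1 μ ≤ eLpNorm K p μ * μ Set.univ ^ (1 / (1:ℝ≥0∞).toReal - 1 / p.toReal) :=
    eLpNorm_le_eLpNorm_mul_rpow_measure_univ hp hKm
  have hμuniv : μ Set.univ = ENNReal.ofReal (t - s) := by
    rw [hμ, Measure.restrict_apply_univ, Real.volume_Icc]
  have hexp : (1 - 1/p).toReal = 1 / (1:ℝ≥0∞).toReal - 1 / p.toReal := by
    rcases eq_or_ne p ∞ with hp' | hp'
    · simp [hp']
    · rw [ENNReal.toReal_sub_of_le (by simpa using ENNReal.inv_le_one.mpr hp) (by simp)]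
      simp [one_div, ENNReal.toReal_inv]
  have hexp0 : 0 ≤ 1 / (1:ℝ≥0∞).toReal - 1 / p.toReal := by
    rw [← hexp]; exact ENNReal.toReal_nonneg
  have hrfin : eLpNorm K p μ * μ Set.univ ^ (1 / (1:ℝ≥0∞).toReal - 1 / p.toReal) ≠ ∞ := by
    apply ENNReal.mul_ne_top hfin
    rw [hμuniv]
    exact (ENNReal.rpow_lt_top_of_nonneg hexp0 ENNReal.ofReal_ne_top).ne
  calc ∫ r in Icc s t, K r = (eLpNorm K 1 μ).toReal := h1
    _ ≤ (eLpNorm K p μ * μ Set.univ ^ (1 / (1:ℝ≥0∞).toReal - 1 / p.toReal)).toReal :=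
        ENNReal.toReal_mono hrfin h2
    _ = (eLpNorm K p μ).toReal * (t - s) ^ ((1 - 1/p).toReal) := by
        rw [ENNReal.toReal_mul, hμuniv, hexp, ← ENNReal.toReal_rpow,
          ENNReal.toReal_ofReal (by linarith)]

set_option maxHeartbeats 1000000 in
lemma gronwall_aux {A B : ℝ} (hAB : A < B) {h φ : ℝ → ℝ}
    (hh : IntegrableOn h (Icc A B)) (hh0 : ∀ r ∈ Icc A B, 0 ≤ h r)
    (hhφ : IntegrableOn (fun r => h r * φ r) (Icc A B))
    (hφ0 : ∀ r ∈ Icc A B, 0 ≤ φ r)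
    {a : ℝ} (ha : 0 ≤ a)
    (key : ∀ t ∈ Icc A B, φ t ≤ a + ∫ r in A..t, h r * φ r)
    {C θ : ℝ} (hθ : 0 < θ) (hC : 0 ≤ C)
    (hHol : ∀ s t, A ≤ s → s ≤ t → t ≤ B → ∫ r in s..t, h r ≤ C * (t - s) ^ θ)
    {ρ : ℝ} (hρ : 1 < ρ) :
    ∀ t ∈ Icc A B, φ t ≤ a * ρ * Real.exp (∫ r in A..B, h r) := by
  have hInth : ∀ s t, s ∈ Icc A B → t ∈ Icc A B → IntervalIntegrable h volume s t :=
    fun s t hs ht => (hh.mono_set (uIcc_subset_Icc hs ht)).intervalIntegrable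
  have hInthφ : ∀ s t, s ∈ Icc A B → t ∈ Icc A B →
      IntervalIntegrable (fun r => h r * φ r) volume s t :=
    fun s t hs ht => (hhφ.mono_set (uIcc_subset_Icc hs ht)).intervalIntegrable
  have hABmem : A ∈ Icc A B := ⟨le_rfl, hAB.le⟩
  have hBmem : B ∈ Icc A B := ⟨hAB.le, le_rfl⟩
  set W : ℝ → ℝ := fun t => a + ∫ r in A..t, h r * φ r with hW
  have hWadd : ∀ s t, s ∈ Icc A B → t ∈ Icc A B →
      W t = W s + ∫ r in s..t, h r * φ r := by
    intro s t hs ht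
    have := intervalIntegral.integral_add_adjacent_intervals
      (hInthφ A s hABmem hs) (hInthφ s t hs ht)
    simp only [hW]; linarith
  have hWmono : ∀ s t, s ∈ Icc A B → t ∈ Icc A B → s ≤ t → W s ≤ W t := by
    intro s t hs ht hst
    have h0 : 0 ≤ ∫ r in s..t, h r * φ r := by
      apply intervalIntegral.integral_nonneg hst
      intro r hr
      have hrm : r ∈ Icc A B := ⟨hs.1.trans hr.1, hr.2.trans ht.2⟩
      exact mul_nonneg (hh0 r hrm) (hφ0 r hrm)
    rw [hWadd s t hs ht]; linarith
  have hWA : W A = a := by simp [hW]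
  have hW0 : ∀ t ∈ Icc A B, 0 ≤ W t := by
    intro t ht
    have := hWmono A t hABmem ht ht.1
    rw [hWA] at this; linarith
  have hφW : ∀ t ∈ Icc A B, φ t ≤ W t := key
  set J := ∫ r in A..B, h r with hJd
  have hJ0 : 0 ≤ J :=
    intervalIntegral.integral_nonneg hAB.le (fun r hr => hh0 r hr)
  have hJt : ∀ t ∈ Icc A B, ∫ r in A..t, h r ≤ J := by
    intro t ht
    have hadd := intervalIntegral.integral_add_adjacent_intervals
      (hInth A t hABmem ht) (hInth t B ht hBmem)
    have h0 : 0 ≤ ∫ r in t..B, h r := by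
      apply intervalIntegral.integral_nonneg ht.2
      intro r hr; exact hh0 r ⟨ht.1.trans hr.1, hr.2⟩
    rw [hJd]; linarith
  set ε := min (1/2 : ℝ) (Real.log ρ / (J + 1)) with hεd
  have hlogρ : 0 < Real.log ρ := Real.log_pos hρ
  have hε0 : 0 < ε := lt_min (by norm_num) (div_pos hlogρ (by linarith))
  have hε12 : ε ≤ 1/2 := min_le_left _ _
  have hεJ : ε * J ≤ Real.log ρ := by
    have h1 : ε ≤ Real.log ρ / (J + 1) := min_le_right _ _
    have h2 : ε * (J + 1) ≤ Real.log ρ := by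
      rw [← div_mul_cancel₀ (Real.log ρ) (show (J:ℝ) + 1 ≠ 0 by linarith)]
      exact mul_le_mul_of_nonneg_right h1 (by linarith)
    nlinarith
  -- mesh
  set m := (ε / (C + 1)) ^ (1/θ) with hmd
  have hm0 : 0 < m := Real.rpow_pos_of_pos (div_pos hε0 (by linarith)) _
  obtain ⟨N, hN⟩ := exists_nat_ge ((B - A) / m)
  have hNpos : (0:ℝ) < (N:ℝ) + 1 := by positivity
  set δ := (B - A) / ((N:ℝ) + 1) with hδd
  have hδ0 : 0 < δ := div_pos (by linarith) hNpos
  have hδm : δ ≤ m := by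
    rw [hδd, div_le_iff₀ hNpos]
    have h1 : B - A ≤ (N:ℝ) * m := (div_le_iff₀ hm0).mp hN
    nlinarith
  have hmθ : m ^ θ = ε / (C + 1) := by
    rw [hmd, ← Real.rpow_mul (le_of_lt (div_pos hε0 (by linarith))), one_div,
      inv_mul_cancel₀ hθ.ne', Real.rpow_one]
  have hmesh : C * δ ^ θ ≤ ε := by
    have h1 : δ ^ θ ≤ m ^ θ := Real.rpow_le_rpow hδ0.le hδm hθ.le
    have h2 : C * δ ^ θ ≤ C * m ^ θ := mul_le_mul_of_nonneg_left h1 hC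
    rw [hmθ] at h2
    have : C * (ε / (C + 1)) ≤ ε := by
      rw [mul_div_assoc'] at *
      rw [div_le_iff₀ (by linarith : (0:ℝ) < C + 1)]
      nlinarith
    linarith
  -- main induction
  have main : ∀ i : ℕ, ∀ t, A ≤ t → t ≤ A + (i:ℝ) * δ → t ≤ B →
      W t ≤ a * Real.exp ((1 + ε) * ∫ r in A..t, h r) := by
    intro i
    induction i with
    | zero =>
        intro t hAt htA _
        have ht : t = A := le_antisymm (by simpa using htA) hAt
        subst ht
        simp [hWA]
    | succ i ih =>
        intro t hAt hti htB
        rcases le_or_gt t (A + (i:ℝ) * δ) with hle | hgt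
        · exact ih t hAt hle htB
        · set s := A + (i:ℝ) * δ with hsd
          have hAs : A ≤ s := by
            have : (0:ℝ) ≤ (i:ℝ) * δ := by positivity
            linarith
          have hst : s < t := hgt
          have hsB : s ≤ B := hst.le.trans htB
          have hsmem : s ∈ Icc A B := ⟨hAs, hsB⟩
          have htmem : t ∈ Icc A B := ⟨hAt, htB⟩
          set u := ∫ r in s..t, h r with hud
          have hu0 : 0 ≤ u :=
            intervalIntegral.integral_nonneg hst.le
              (fun r hr => hh0 r ⟨hAs.trans hr.1, hr.2.trans htB⟩)
          have hts : t - s ≤ δ := by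
            have : t ≤ s + δ := by
              rw [hsd]; push_cast at hti ⊢; linarith
            linarith
          have huε : u ≤ ε := by
            refine (hHol s t hAs hst.le htB).trans (le_trans ?_ hmesh)
            exact mul_le_mul_of_nonneg_left
              (Real.rpow_le_rpow (by linarith) hts hθ.le) hC
          have hu12 : u ≤ 1/2 := huε.trans hε12
          have key2 : W t ≤ W s + u * W t := by
            have h1 : W t = W s + ∫ r in s..t, h r * φ r := hWadd s t hsmem htmem
            have h2 : ∫ r in s..t, h r * φ r ≤ ∫ r in s..t, h r * W t := by
              apply intervalIntegral.integral_mono_on hst.le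
                (hInthφ s t hsmem htmem) ((hInth s t hsmem htmem).mul_const _)
              intro r hr
              have hrm : r ∈ Icc A B := ⟨hAs.trans hr.1, hr.2.trans htB⟩
              exact mul_le_mul_of_nonneg_left
                ((hφW r hrm).trans (hWmono r t hrm htmem hr.2)) (hh0 r hrm)
            have h3 : ∫ r in s..t, h r * W t = u * W t := by
              rw [intervalIntegral.integral_mul_const]
            linarith
          have hstep : W t ≤ W s * Real.exp (u + u^2) :=
            div_step hu0 hu12 (hW0 s hsmem) (by linarith)
          have hstep2 : W t ≤ W s * Real.exp ((1 + ε) * u) := by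
            refine hstep.trans (mul_le_mul_of_nonneg_left
              (Real.exp_le_exp.mpr (by nlinarith)) (hW0 s hsmem))
          have hihs : W s ≤ a * Real.exp ((1 + ε) * ∫ r in A..s, h r) :=
            ih s hAs le_rfl hsB
          have hadd : (∫ r in A..s, h r) + u = ∫ r in A..t, h r := by
            rw [hud]
            exact intervalIntegral.integral_add_adjacent_intervals
              (hInth A s hABmem hsmem) (hInth s t hsmem htmem)
          calc W t ≤ W s * Real.exp ((1 + ε) * u) := hstep2
            _ ≤ (a * Real.exp ((1 + ε) * ∫ r in A..s, h r)) * Real.exp ((1 + ε) * u) :=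
                mul_le_mul_of_nonneg_right hihs (Real.exp_pos _).le
            _ = a * Real.exp ((1 + ε) * ∫ r in A..t, h r) := by
                rw [mul_assoc, ← Real.exp_add, ← hadd]; ring_nf
  -- conclusion
  intro t ht
  have hBt : t ≤ A + ((N:ℝ) + 1) * δ := by
    rw [hδd]; field_simp; linarith [ht.2]
  have hWt : W t ≤ a * Real.exp ((1 + ε) * ∫ r in A..t, h r) := by
    have := main (N + 1) t ht.1 (by push_cast; linarith) ht.2
    exact this
  have hexp1 : (1 + ε) * (∫ r in A..t, h r) ≤ (1 + ε) * J :=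
    mul_le_mul_of_nonneg_left (hJt t ht) (by linarith)
  have hfin : a * Real.exp ((1 + ε) * J) ≤ a * ρ * Real.exp J := by
    have h1 : Real.exp ((1 + ε) * J) = Real.exp J * Real.exp (ε * J) := by
      rw [← Real.exp_add]; ring_nf
    have h2 : Real.exp (ε * J) ≤ ρ := by
      calc Real.exp (ε * J) ≤ Real.exp (Real.log ρ) := Real.exp_le_exp.mpr hεJ
        _ = ρ := Real.exp_log (by linarith)
    calc a * Real.exp ((1 + ε) * J) = a * (Real.exp J * Real.exp (ε * J)) := by rw [h1]
      _ ≤ a * (Real.exp J * ρ) := by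
          refine mul_le_mul_of_nonneg_left (mul_le_mul_of_nonneg_left h2 (Real.exp_pos _).le) ha
      _ = a * ρ * Real.exp J := by ring
  calc φ t ≤ W t := hφW t ht
    _ ≤ a * Real.exp ((1 + ε) * ∫ r in A..t, h r) := hWt
    _ ≤ a * Real.exp ((1 + ε) * J) :=
        mul_le_mul_of_nonneg_left (Real.exp_le_exp.mpr hexp1) ha
    _ ≤ a * ρ * Real.exp J := hfin

lemma gronwall_aux' {A B : ℝ} (hAB : A < B) {h φ : ℝ → ℝ}
    (hh : IntegrableOn h (Icc A B)) (hh0 : ∀ r ∈ Icc A B, 0 ≤ h r)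
    (hhφ : IntegrableOn (fun r => h r * φ r) (Icc A B))
    (hφ0 : ∀ r ∈ Icc A B, 0 ≤ φ r)
    {a : ℝ} (ha : 0 ≤ a)
    (key : ∀ t ∈ Icc A B, φ t ≤ a + ∫ r in A..t, h r * φ r)
    {C θ : ℝ} (hθ : 0 < θ) (hC : 0 ≤ C)
    (hHol : ∀ s t, A ≤ s → s ≤ t → t ≤ B → ∫ r in s..t, h r ≤ C * (t - s) ^ θ)
    {ρ : ℝ} (hρ : 1 ≤ ρ) :
    ∀ t ∈ Icc A B, φ t ≤ a * ρ * Real.exp (∫ r in A..B, h r) := by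
  rcases eq_or_lt_of_le hρ with hρ1 | hρ1
  · intro t ht
    rw [← hρ1, mul_one]
    set E := Real.exp (∫ r in A..B, h r) with hE
    have hE0 : 0 < E := Real.exp_pos _
    apply le_of_forall_pos_le_add
    intro ε' hε'
    set D := a * E with hD
    have hD0 : 0 ≤ D := mul_nonneg ha hE0.le
    have hρ2 : (1:ℝ) < 1 + ε' / (D + 1) := by
      have : 0 < ε' / (D + 1) := div_pos hε' (by linarith)
      linarith
    have hg := gronwall_aux hAB hh hh0 hhφ hφ0 ha key hθ hC hHol hρ2 t ht
    have hfrac : D / (D + 1) ≤ 1 := by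
      rw [div_le_one (by linarith)]; linarith
    calc φ t ≤ a * (1 + ε' / (D + 1)) * E := hg
      _ = D + D / (D + 1) * ε' := by
          rw [hD]; field_simp
      _ ≤ D + 1 * ε' := by
          exact add_le_add_right (mul_le_mul_of_nonneg_right hfrac hε'.le) _
      _ = a * E + ε' := by rw [hD]; ring
  · exact gronwall_aux hAB hh hh0 hhφ hφ0 ha key hθ hC hHol hρ1

lemma Kseq_nonneg (K : ℝ → ℝ) (hK0 : ∀ t, 0 ≤ K t) (τ K0 : ℝ) (h0 : 0 ≤ K0) :
    ∀ j, 0 ≤ Kseq K τ K0 j := by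
  intro j
  induction j with
  | zero => exact h0
  | succ j ih =>
      have hI : 0 ≤ ∫ t in Icc ((j:ℝ) * τ) (((j:ℝ) + 1) * τ), K t :=
        setIntegral_nonneg measurableSet_Icc fun r _ => hK0 r
      show 0 ≤ (1 + Kseq K τ K0 j) * (1 + _) * Real.exp _
      exact mul_nonneg (mul_nonneg (by linarith) (by linarith)) (Real.exp_pos _).le

theorem stmt12 (d n : ℕ) (τ : ℝ) (hτ : 0 < τ)
    (f : ℝ → EuclideanSpace ℝ (Fin d) → EuclideanSpace ℝ (Fin d) → EuclideanSpace ℝ (Fin d))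
    (x₀ : EuclideanSpace ℝ (Fin d)) (K : ℝ → ℝ)
    (hA1 : ∀ t, Continuous fun xz : EuclideanSpace ℝ (Fin d) × EuclideanSpace ℝ (Fin d) =>
      f t xz.1 xz.2)
    (hA2 : ∀ x z, Measurable fun t => f t x z)
    (hK0 : ∀ t, 0 ≤ K t) (hKint : IntegrableOn K (Icc (0:ℝ) ((n+1)*τ)))
    (hA3 : ∀ t ∈ Icc (0:ℝ) ((n+1)*τ), ∀ x z : EuclideanSpace ℝ (Fin d),
      ‖f t x z‖ ≤ K t * (1 + ‖x‖) * (1 + ‖z‖))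
    (hA4 : ∀ U : Set (EuclideanSpace ℝ (Fin d)), IsCompact U →
      ∃ L : ℝ → ℝ, (∀ t, 0 ≤ L t) ∧ IntegrableOn L (Icc (0:ℝ) ((n+1)*τ)) ∧
        ∀ t ∈ Icc (0:ℝ) ((n+1)*τ), ∀ x₁ ∈ U, ∀ x₂ ∈ U, ∀ z : EuclideanSpace ℝ (Fin d),
          ‖f t x₁ z - f t x₂ z‖ ≤ L t * (1 + ‖z‖) * ‖x₁ - x₂‖)
    -- (A5)
    (p : ℝ≥0∞) (hp : 1 < p)
    (hKLp : MemLp K p (volume.restrict (Icc (0:ℝ) ((n+1)*τ))))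
    (x : ℝ → EuclideanSpace ℝ (Fin d))
    (hinit : ∀ t ∈ Icc (-τ) (0:ℝ), x t = x₀)
    (hint : IntegrableOn (fun s => f s (x s) (x (s - τ))) (Icc (0:ℝ) ((n+1)*τ)))
    (hsol : ∀ t ∈ Icc (0:ℝ) ((n+1)*τ), x t = x₀ + ∫ s in (0:ℝ)..t, f s (x s) (x (s - τ))) :
    ∀ j ≤ n, ∀ s ∈ Icc ((j:ℝ) * τ) (((j:ℝ) + 1) * τ), ∀ t ∈ Icc ((j:ℝ) * τ) (((j:ℝ) + 1) * τ),
      ‖x t - x s‖ ≤ (1 + Kseq K τ ‖x₀‖ j) * (1 + Kseq K τ ‖x₀‖ (j + 1)) *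
        (eLpNorm K p (volume.restrict (Icc ((j:ℝ) * τ) (((j:ℝ) + 1) * τ)))).toReal *
        |t - s| ^ ((1 - 1/p).toReal) := by
  have hT0 : (0:ℝ) < ((n:ℝ) + 1) * τ := by positivity
  set T : ℝ := ((n:ℝ) + 1) * τ with hTd
  set G : ℝ → EuclideanSpace ℝ (Fin d) := fun s => f s (x s) (x (s - τ)) with hGd
  -- interval inclusions
  have hsub : ∀ j : ℕ, j ≤ n → Icc ((j:ℝ) * τ) (((j:ℝ) + 1) * τ) ⊆ Icc 0 T := by
    intro j hj
    apply Icc_subset_Icc (by positivity)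
    have hcast : (j:ℝ) ≤ (n:ℝ) := Nat.cast_le.mpr hj
    rw [hTd]; nlinarith
  -- interval integrability of G
  have hGiv : ∀ s t, s ∈ Icc (0:ℝ) T → t ∈ Icc (0:ℝ) T → IntervalIntegrable G volume s t :=
    fun s t hs ht => (hint.mono_set (uIcc_subset_Icc hs ht)).intervalIntegrable
  -- continuity of x on [0, T]
  have hxc : ContinuousOn x (Icc 0 T) := by
    have hGii : IntervalIntegrable G volume 0 T :=
      hGiv 0 T ⟨le_rfl, hT0.le⟩ ⟨hT0.le, le_rfl⟩
    have hcont := intervalIntegral.continuousOn_primitive_interval' hGii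
      (left_mem_uIcc (a := (0:ℝ)) (b := T))
    rw [uIcc_of_le hT0.le] at hcont
    exact (continuousOn_const.add hcont).congr fun t ht => hsol t ht
  -- basic facts
  have hKseq0 := Kseq_nonneg K hK0 τ ‖x₀‖ (norm_nonneg x₀)
  set θ : ℝ := (1 - 1/p).toReal with hθd
  have hθ0 : 0 < θ := by
    have h1 : 1/p < 1 := by rw [one_div]; exact ENNReal.inv_lt_one.mpr hp
    rw [hθd]
    apply ENNReal.toReal_pos
    · exact (tsub_pos_of_lt h1).ne'
    · exact (tsub_le_self.trans_lt ENNReal.one_lt_top).ne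
  have hNfin : ∀ j : ℕ, j ≤ n →
      eLpNorm K p (volume.restrict (Icc ((j:ℝ) * τ) (((j:ℝ) + 1) * τ))) ≠ ∞ := by
    intro j hj
    exact ((eLpNorm_mono_measure K (Measure.restrict_mono (hsub j hj) le_rfl)).trans_lt
      hKLp.eLpNorm_lt_top).ne
  -- Hölder control of ∫ K on subintervals
  have hHolderK : ∀ j : ℕ, j ≤ n → ∀ s t, (j:ℝ) * τ ≤ s → s ≤ t → t ≤ ((j:ℝ) + 1) * τ →
      ∫ r in s..t, K r ≤
        (eLpNorm K p (volume.restrict (Icc ((j:ℝ) * τ) (((j:ℝ) + 1) * τ)))).toReal *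
          (t - s) ^ θ := by
    intro j hj s t hs hst ht
    have hstsub : Icc s t ⊆ Icc ((j:ℝ) * τ) (((j:ℝ) + 1) * τ) := Icc_subset_Icc hs ht
    have hfinst : eLpNorm K p (volume.restrict (Icc s t)) ≠ ∞ :=
      ((eLpNorm_mono_measure K (Measure.restrict_mono hstsub le_rfl)).trans_lt
        (lt_top_iff_ne_top.mpr (hNfin j hj))).ne
    rw [intervalIntegral.integral_of_le hst, ← integral_Icc_eq_integral_Ioc]
    refine (holder_L1 K hK0 hst ((hKint.mono_set (hstsub.trans (hsub j hj)))) p hp.le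
      hfinst).trans ?_
    have := ENNReal.toReal_mono (hNfin j hj)
      (eLpNorm_mono_measure K (Measure.restrict_mono hstsub (le_refl volume)))
    exact mul_le_mul_of_nonneg_right this (Real.rpow_nonneg (by linarith) _)
  -- uniform bound on each delay interval
  have hbnd : ∀ j : ℕ, j ≤ n + 1 → ∀ t, (j:ℝ) * τ - τ ≤ t → t ≤ (j:ℝ) * τ →
      ‖x t‖ ≤ Kseq K τ ‖x₀‖ j := by
    intro j
    induction j with
    | zero =>
        intro _ t ht1 ht2
        have hx : x t = x₀ := hinit t ⟨by simpa using ht1, by simpa using ht2⟩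
        rw [hx]
        exact le_of_eq rfl
    | succ j ih =>
        intro hj t ht1 ht2
        have hjn : j ≤ n := by omega
        have hcast : ((j+1:ℕ):ℝ) = (j:ℝ) + 1 := by push_cast; ring
        rw [hcast] at ht1 ht2
        set A := (j:ℝ) * τ with hA
        set B := ((j:ℝ) + 1) * τ with hB
        have hexpand : B = A + τ := by rw [hA, hB]; ring
        have hAB : A < B := by rw [hexpand]; linarith
        have ht1' : A ≤ t := by rw [hA]; linarith [ht1]
        have ht2' : t ≤ B := ht2
        have hABsub : Icc A B ⊆ Icc 0 T := hsub j hjn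
        have h0T : (0:ℝ) ∈ Icc (0:ℝ) T := ⟨le_rfl, hT0.le⟩
        set Kj := Kseq K τ ‖x₀‖ j with hKj
        have hKj0 : 0 ≤ Kj := hKseq0 j
        have hprev : ∀ r, A ≤ r → r ≤ B → ‖x (r - τ)‖ ≤ Kj := by
          intro r h1 h2
          exact ih (by omega) (r - τ) (by linarith) (by rw [hexpand] at h2; linarith)
        have hxA : ‖x A‖ ≤ Kj := ih (by omega) A (by linarith) le_rfl
        set φ : ℝ → ℝ := fun r => 1 + ‖x r‖ with hφd
        set h : ℝ → ℝ := fun r => (1 + Kj) * K r with hhd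
        have hφc : ContinuousOn φ (Icc A B) :=
          continuousOn_const.add (hxc.mono hABsub).norm
        obtain ⟨M, hM⟩ := (isCompact_Icc (a := A) (b := B)).exists_bound_of_continuousOn hφc
        have hhint : IntegrableOn h (Icc A B) := (hKint.mono_set hABsub).const_mul _
        have hφmeas : AEStronglyMeasurable φ (volume.restrict (Icc A B)) :=
          hφc.aestronglyMeasurable measurableSet_Icc
        have hhφint : IntegrableOn (fun r => h r * φ r) (Icc A B) := by
          have h2 := hhint.bdd_mul (c := M) hφmeas
            ((ae_restrict_iff' measurableSet_Icc).mpr (ae_of_all _ hM))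
          exact h2.congr (ae_of_all _ fun r => mul_comm _ _)
        have hh0 : ∀ r ∈ Icc A B, 0 ≤ h r := fun r _ => mul_nonneg (by linarith) (hK0 r)
        have hφ0 : ∀ r ∈ Icc A B, 0 ≤ φ r := fun r _ => by rw [hφd]; positivity
        have ha : (0:ℝ) ≤ 1 + Kj := by linarith
        -- the integral inequality
        have key : ∀ t' ∈ Icc A B, φ t' ≤ (1 + Kj) + ∫ r in A..t', h r * φ r := by
          intro t' ht'
          have hsubint : (∫ r in A..t', G r) =
              (∫ r in (0:ℝ)..t', G r) - ∫ r in (0:ℝ)..A, G r :=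
            (intervalIntegral.integral_interval_sub_left
              (hGiv 0 t' h0T (hABsub ht')) (hGiv 0 A h0T (hABsub ⟨le_rfl, hAB.le⟩))).symm
          have hxt' : x t' = x A + ∫ r in A..t', G r := by
            rw [hsol t' (hABsub ht'), hsol A (hABsub ⟨le_rfl, hAB.le⟩), hsubint]
            abel
          have hptwise : ∀ r ∈ Set.uIoc A t', ‖G r‖ ≤ h r * φ r := by
            intro r hr
            rw [uIoc_of_le ht'.1] at hr
            have hrm : r ∈ Icc A B := ⟨hr.1.le, hr.2.trans ht'.2⟩
            have h3 := hA3 r (hABsub hrm) (x r) (x (r - τ))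
            have h4 : ‖x (r - τ)‖ ≤ Kj := hprev r hrm.1 hrm.2
            calc ‖G r‖ ≤ K r * (1 + ‖x r‖) * (1 + ‖x (r - τ)‖) := h3
              _ ≤ K r * (1 + ‖x r‖) * (1 + Kj) := by
                  refine mul_le_mul_of_nonneg_left (by linarith) ?_
                  exact mul_nonneg (hK0 r) (by positivity)
              _ = h r * φ r := by simp only [hhd, hφd]; ring
          have hbdd : IntervalIntegrable (fun r => h r * φ r) volume A t' :=
            (hhφint.mono_set (uIcc_subset_Icc ⟨le_rfl, hAB.le⟩ ht')).intervalIntegrable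
          have hnorm := intervalIntegral.norm_integral_le_abs_of_norm_le
            ((ae_restrict_iff' measurableSet_uIoc).mpr (ae_of_all _ hptwise)) hbdd
          have hIpos : 0 ≤ ∫ r in A..t', h r * φ r :=
            intervalIntegral.integral_nonneg ht'.1 (fun r hr =>
              mul_nonneg (hh0 r ⟨hr.1, hr.2.trans ht'.2⟩) (by rw [hφd]; positivity))
          rw [abs_of_nonneg hIpos] at hnorm
          have h6 : ‖x t'‖ ≤ ‖x A‖ + ∫ r in A..t', h r * φ r := by
            rw [hxt']
            exact (norm_add_le _ _).trans (by linarith)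
          show 1 + ‖x t'‖ ≤ (1 + Kj) + ∫ r in A..t', h r * φ r
          linarith
        -- Hölder control of h
        have hHolh : ∀ s t', A ≤ s → s ≤ t' → t' ≤ B →
            ∫ r in s..t', h r ≤
              ((1 + Kj) * (eLpNorm K p (volume.restrict (Icc A B))).toReal) *
                (t' - s) ^ θ := by
          intro s t' h1 h2 h3
          have h5 : (∫ r in s..t', h r) = (1 + Kj) * ∫ r in s..t', K r := by
            simp only [hhd]
            rw [intervalIntegral.integral_const_mul]
          rw [h5]
          calc (1 + Kj) * ∫ r in s..t', K r
              ≤ (1 + Kj) * ((eLpNorm K p (volume.restrict (Icc A B))).toReal * (t' - s) ^ θ) :=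
                mul_le_mul_of_nonneg_left (hHolderK j hjn s t' h1 h2 h3) ha
            _ = ((1 + Kj) * (eLpNorm K p (volume.restrict (Icc A B))).toReal) *
                (t' - s) ^ θ := by ring
        set I := ∫ r in Icc A B, K r with hI
        have hI0 : 0 ≤ I := setIntegral_nonneg measurableSet_Icc fun r _ => hK0 r
        have hJeq : (∫ r in A..B, h r) = (1 + Kj) * I := by
          simp only [hhd]
          rw [intervalIntegral.integral_const_mul, hI,
            intervalIntegral.integral_of_le hAB.le, ← integral_Icc_eq_integral_Ioc]
        have hgron := gronwall_aux' hAB hhint hh0 hhφint hφ0 ha key hθ0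
          (mul_nonneg ha ENNReal.toReal_nonneg) hHolh
          (by linarith : (1:ℝ) ≤ 1 + I) t ⟨ht1', ht2'⟩
        rw [hJeq] at hgron
        have hKs : Kseq K τ ‖x₀‖ (j+1) = (1 + Kj) * (1 + I) * Real.exp ((1 + Kj) * I) := by
          rw [hKj, hI, hA, hB]
          simp only [Kseq]
        rw [hKs]
        have hφt : φ t = 1 + ‖x t‖ := rfl
        linarith [hgron]
  -- main estimate for s ≤ t
  have est : ∀ j : ℕ, j ≤ n → ∀ s t, s ∈ Icc ((j:ℝ)*τ) (((j:ℝ)+1)*τ) →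
      t ∈ Icc ((j:ℝ)*τ) (((j:ℝ)+1)*τ) → s ≤ t →
      ‖x t - x s‖ ≤ (1 + Kseq K τ ‖x₀‖ j) * (1 + Kseq K τ ‖x₀‖ (j+1)) *
        (eLpNorm K p (volume.restrict (Icc ((j:ℝ)*τ) (((j:ℝ)+1)*τ)))).toReal * (t - s) ^ θ := by
    intro j hj s t hs ht hst
    set Kj := Kseq K τ ‖x₀‖ j with hKjd
    set Kj1 := Kseq K τ ‖x₀‖ (j+1) with hKj1d
    have hKj0 : 0 ≤ Kj := hKseq0 j
    have hKj10 : 0 ≤ Kj1 := hKseq0 (j+1)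
    set c := (1 + Kj) * (1 + Kj1) with hcd
    have hc0 : (0:ℝ) ≤ c := by rw [hcd]; positivity
    have hABsub := hsub j hj
    have h0T : (0:ℝ) ∈ Icc (0:ℝ) T := ⟨le_rfl, hT0.le⟩
    have hexp : ((j:ℝ)+1)*τ = (j:ℝ)*τ + τ := by ring
    have hcast : ((j+1:ℕ):ℝ) = (j:ℝ) + 1 := by push_cast; ring
    have hxts : x t - x s = ∫ r in s..t, G r := by
      rw [hsol t (hABsub ht), hsol s (hABsub hs),
        ← intervalIntegral.integral_interval_sub_left
          (hGiv 0 t h0T (hABsub ht)) (hGiv 0 s h0T (hABsub hs))]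
      abel
    have hbound : ∀ r ∈ Set.uIoc s t, ‖G r‖ ≤ c * K r := by
      intro r hr
      rw [uIoc_of_le hst] at hr
      have hrm : r ∈ Icc ((j:ℝ)*τ) (((j:ℝ)+1)*τ) := ⟨hs.1.trans hr.1.le, hr.2.trans ht.2⟩
      have h3 := hA3 r (hABsub hrm) (x r) (x (r - τ))
      have h4 : ‖x (r - τ)‖ ≤ Kj :=
        hbnd j (by omega) (r - τ) (by linarith [hrm.1])
          (by have := hrm.2; rw [hexp] at this; linarith)
      have h5 : ‖x r‖ ≤ Kj1 :=
        hbnd (j+1) (by omega) r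
          (by rw [hcast]; linarith [hrm.1, hexp])
          (by rw [hcast]; exact hrm.2)
      calc ‖G r‖ ≤ K r * (1 + ‖x r‖) * (1 + ‖x (r - τ)‖) := h3
        _ ≤ K r * (1 + ‖x r‖) * (1 + Kj) := by
            refine mul_le_mul_of_nonneg_left (by linarith) ?_
            exact mul_nonneg (hK0 r) (by positivity)
        _ ≤ K r * (1 + Kj1) * (1 + Kj) := by
            refine mul_le_mul_of_nonneg_right
              (mul_le_mul_of_nonneg_left (by linarith) (hK0 r)) (by linarith)
        _ = c * K r := by rw [hcd]; ring
    have hKiv : IntervalIntegrable (fun r => c * K r) volume s t := by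
      have h7 : IntegrableOn (fun r => c * K r) (uIcc s t) := by
        rw [uIcc_of_le hst]
        exact (hKint.mono_set ((Icc_subset_Icc hs.1 ht.2).trans hABsub)).const_mul c
      exact h7.intervalIntegrable
    have hnorm := intervalIntegral.norm_integral_le_abs_of_norm_le
      ((ae_restrict_iff' measurableSet_uIoc).mpr (ae_of_all _ hbound)) hKiv
    have hIK0 : 0 ≤ ∫ r in s..t, c * K r :=
      intervalIntegral.integral_nonneg hst (fun r _ => mul_nonneg hc0 (hK0 r))
    rw [hxts]
    calc ‖∫ r in s..t, G r‖ ≤ |∫ r in s..t, c * K r| := hnorm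
      _ = c * ∫ r in s..t, K r := by
          rw [abs_of_nonneg hIK0, intervalIntegral.integral_const_mul]
      _ ≤ c * ((eLpNorm K p (volume.restrict (Icc ((j:ℝ)*τ) (((j:ℝ)+1)*τ)))).toReal *
            (t - s) ^ θ) :=
          mul_le_mul_of_nonneg_left (hHolderK j hj s t hs.1 hst ht.2) hc0
      _ = (1 + Kj) * (1 + Kj1) *
            (eLpNorm K p (volume.restrict (Icc ((j:ℝ)*τ) (((j:ℝ)+1)*τ)))).toReal *
            (t - s) ^ θ := by rw [hcd]; ring
  -- conclusion
  intro j hj s hs t ht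
  rcases le_total s t with hst | hst
  · rw [abs_of_nonneg (sub_nonneg.mpr hst)]
    exact est j hj s t hs ht hst
  · rw [norm_sub_rev, abs_sub_comm, abs_of_nonneg (sub_nonneg.mpr hst)]
    exact est j hj t s ht hs hst
end
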